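/- Let L(n) : B^0 → X (n ≥ 0) be bounded linear operators defining the system x(n+1) = L(n)x_n + f(n). If the nonhomogeneous system is (ℓ^1,ℓ^∞)-stable and there exists m ≤ 0 such that Σ_{n=0}^{∞} ‖L(n)P_{[−∞,m]}‖_{B^0→X} < ∞, then the homogeneous system is uniformly stable in B^0. -/

import Mathlib

open scoped ENNReal
open MeasureTheory

namespace BP

variable {X : Type*} [NormedAddCommGroup X] [NormedSpace ℝ X] [CompleteSpace X]

/-- Weighted coordinate size: index `k : ℕ` represents the coordinate `−k ≤ 0`,
so the weight `e^{γ m}` becomes `e^{−γ k}`. -/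
noncomputable def wnorm (γ : ℝ) (φ : ℕ → X) (k : ℕ) : ℝ := ‖φ k‖ * Real.exp (-(γ * k))

/-- Membership in the phase space `B^γ`. -/
def MemB (γ : ℝ) (φ : ℕ → X) : Prop := BddAbove (Set.range (wnorm γ φ))

/-- The `B^γ` norm `|φ|_{B^γ} = sup_{m ≤ 0} ‖φ(m)‖ e^{γ m}`. -/
noncomputable def Bnorm (γ : ℝ) (φ : ℕ → X) : ℝ := ⨆ k, wnorm γ φ k

/-- The history `x_n` of `x : ℤ → X` at time `n` : coordinate `−k` is `x (n − k)`. -/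
def hist (x : ℤ → X) (n : ℤ) : ℕ → X := fun k => x (n - k)

/-- `x = x(·, τ, φ; f)` is the solution of `x(n+1) = L(n) x_n + f(n)` (`n ≥ τ`), `x_τ = φ`. -/
def IsSolution (L : ℕ → ((ℕ → X) →ₗ[ℝ] X)) (f : ℕ → X) (τ : ℕ) (φ : ℕ → X)
    (x : ℤ → X) : Prop :=
  (∀ k : ℕ, x ((τ : ℤ) - k) = φ k) ∧
  (∀ n : ℕ, τ ≤ n → x ((n : ℤ) + 1) = L n (hist x (n : ℤ)) + f n)

/-- Restriction of `x : ℤ → X` to `ℤ≥0`. -/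
def restrict (x : ℤ → X) : ℕ → X := fun n => x (n : ℤ)

/-- The `ℓ^p(ℤ≥0, X)` norm (valued in `ℝ≥0∞`). -/
noncomputable def lpNorm (p : ℝ≥0∞) {E : Type*} [NormedAddCommGroup E] (f : ℕ → E) : ℝ≥0∞ :=
  eLpNorm f p Measure.count

/-- `L(n)` is a bounded operator from `B^γ` to `X`. -/
def OpBounded (γ : ℝ) (T : (ℕ → X) →ₗ[ℝ] X) : Prop :=
  ∃ C : ℝ, ∀ φ : ℕ → X, MemB γ φ → ‖T φ‖ ≤ C * Bnorm γ φ

/-- The projection `P_{[−∞,−j]}` : keeps coordinates `−k` with `k ≥ j`. -/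
def Ptail (j : ℕ) : (ℕ → X) →ₗ[ℝ] (ℕ → X) where
  toFun φ := fun k => if j ≤ k then φ k else 0
  map_add' φ ψ := by funext k; by_cases h : j ≤ k <;> simp [h]
  map_smul' c φ := by funext k; by_cases h : j ≤ k <;> simp [h]

/-- The projection `P_{[−j,0]}` : keeps coordinates `−k` with `k ≤ j`. -/
def Phead (j : ℕ) : (ℕ → X) →ₗ[ℝ] (ℕ → X) where
  toFun φ := fun k => if k ≤ j then φ k else 0
  map_add' φ ψ := by funext k; by_cases h : k ≤ j <;> simp [h]
  map_smul' c φ := by funext k; by_cases h : k ≤ j <;> simp [h]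

/-- `E_{−j} : X → B^γ`, placing `ψ` at coordinate `−j`. -/
def Ecoord (j : ℕ) : X →ₗ[ℝ] (ℕ → X) where
  toFun ψ := fun k => if k = j then ψ else 0
  map_add' ψ χ := by funext k; by_cases h : k = j <;> simp [h]
  map_smul' c ψ := by funext k; by_cases h : k = j <;> simp [h]

/-- The backward shift `S`. -/
def shiftS : (ℕ → X) →ₗ[ℝ] (ℕ → X) where
  toFun φ := fun k => if k = 0 then 0 else φ (k - 1)
  map_add' φ ψ := by funext k; by_cases h : k = 0 <;> simp [h]
  map_smul' c φ := by funext k; by_cases h : k = 0 <;> simp [h]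

/-- `D(n) = E₀ ∘ L(n) + S`. -/
def Dop (L : ℕ → ((ℕ → X) →ₗ[ℝ] X)) (n : ℕ) : (ℕ → X) →ₗ[ℝ] (ℕ → X) :=
  (Ecoord 0).comp (L n) + shiftS

/-- `h = H g`, `h(n) = Σ_{k=0}^{n−1} S^{n−k−1} (I − P₀) g(k)`. -/
noncomputable def Hop (g : ℕ → (ℕ → X)) : ℕ → (ℕ → X) :=
  fun n => ∑ k ∈ Finset.range n,
    ((shiftS ^ (n - k - 1) : (ℕ → X) →ₗ[ℝ] (ℕ → X))
      ((LinearMap.id - Phead 0 : (ℕ → X) →ₗ[ℝ] (ℕ → X)) (g k)))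

/-- `(ℓ^p, ℓ^q)`-stability of the nonhomogeneous system. -/
def lplqStable (L : ℕ → ((ℕ → X) →ₗ[ℝ] X)) (p q : ℝ≥0∞) : Prop :=
  ∀ f : ℕ → X, lpNorm p f < ∞ → ∀ x : ℤ → X, IsSolution L f 0 0 x →
    lpNorm q (restrict x) < ∞

/-- Uniform exponential stability in `X` w.r.t. `B^γ`. -/
def UESinX (γ : ℝ) (L : ℕ → ((ℕ → X) →ₗ[ℝ] X)) : Prop :=
  ∃ K : ℝ, 1 ≤ K ∧ ∃ ν : ℝ, 0 < ν ∧
    ∀ (τ : ℕ) (φ : ℕ → X), MemB γ φ → ∀ x : ℤ → X, IsSolution L 0 τ φ x →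
      ∀ n : ℕ, τ ≤ n → ‖x (n : ℤ)‖ ≤ K * Real.exp (-(ν * ((n : ℝ) - (τ : ℝ)))) * Bnorm γ φ

/-- Uniform exponential stability in `B^γ`. -/
def UESinB (γ : ℝ) (L : ℕ → ((ℕ → X) →ₗ[ℝ] X)) : Prop :=
  ∃ K : ℝ, 1 ≤ K ∧ ∃ ν : ℝ, 0 < ν ∧
    ∀ (τ : ℕ) (φ : ℕ → X), MemB γ φ → ∀ x : ℤ → X, IsSolution L 0 τ φ x →
      ∀ n : ℕ, τ ≤ n →
        Bnorm γ (hist x (n : ℤ)) ≤ K * Real.exp (-(ν * ((n : ℝ) - (τ : ℝ)))) * Bnorm γ φ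

/-- Uniform stability in `X` w.r.t. `B^γ`. -/
def USinX (γ : ℝ) (L : ℕ → ((ℕ → X) →ₗ[ℝ] X)) : Prop :=
  ∃ K : ℝ, 1 ≤ K ∧
    ∀ (τ : ℕ) (φ : ℕ → X), MemB γ φ → ∀ x : ℤ → X, IsSolution L 0 τ φ x →
      ∀ n : ℕ, τ ≤ n → ‖x (n : ℤ)‖ ≤ K * Bnorm γ φ

/-- Uniform stability in `B^γ`. -/
def USinB (γ : ℝ) (L : ℕ → ((ℕ → X) →ₗ[ℝ] X)) : Prop :=
  ∃ K : ℝ, 1 ≤ K ∧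
    ∀ (τ : ℕ) (φ : ℕ → X), MemB γ φ → ∀ x : ℤ → X, IsSolution L 0 τ φ x →
      ∀ n : ℕ, τ ≤ n → Bnorm γ (hist x (n : ℤ)) ≤ K * Bnorm γ φ

/-- Condition (★): there exists `m ≤ 0` (here `m = −j`, `j : ℕ`) such that
`sup_{n ≥ 0} ‖L(n) P_{[−∞,m]}‖_{B^γ→X} < ∞`. -/
def StarCond (γ : ℝ) (L : ℕ → ((ℕ → X) →ₗ[ℝ] X)) : Prop :=
  ∃ (j : ℕ) (C : ℝ), ∀ (n : ℕ) (φ : ℕ → X), MemB γ φ → ‖L n (Ptail j φ)‖ ≤ C * Bnorm γ φ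

/-- `z` solves the first order system `z(n+1) = A(n) z(n)` (`n ≥ τ`), `z(τ) = ψ`. -/
def IsFOSol (A : ℕ → ((ℕ → X) →ₗ[ℝ] (ℕ → X))) (τ : ℕ) (ψ : ℕ → X)
    (z : ℕ → (ℕ → X)) : Prop :=
  z τ = ψ ∧ ∀ n : ℕ, τ ≤ n → z (n + 1) = A n (z n)

/-- Uniform exponential stability of the first order system in `B^γ`. -/
def FOUES (γ : ℝ) (A : ℕ → ((ℕ → X) →ₗ[ℝ] (ℕ → X))) : Prop :=
  ∃ K : ℝ, 1 ≤ K ∧ ∃ ν : ℝ, 0 < ν ∧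
    ∀ (τ : ℕ) (ψ : ℕ → X), MemB γ ψ → ∀ z : ℕ → (ℕ → X), IsFOSol A τ ψ z →
      ∀ n : ℕ, τ ≤ n →
        Bnorm γ (z n) ≤ K * Real.exp (-(ν * ((n : ℝ) - (τ : ℝ)))) * Bnorm γ ψ

/-- Uniform stability of the first order system in `B^γ`. -/
def FOUS (γ : ℝ) (A : ℕ → ((ℕ → X) →ₗ[ℝ] (ℕ → X))) : Prop :=
  ∃ K : ℝ, 1 ≤ K ∧
    ∀ (τ : ℕ) (ψ : ℕ → X), MemB γ ψ → ∀ z : ℕ → (ℕ → X), IsFOSol A τ ψ z →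
      ∀ n : ℕ, τ ≤ n → Bnorm γ (z n) ≤ K * Bnorm γ ψ

/-- The associated subdiagonal system: `L_sub(0) = 0`, `L_sub(n) = L(n) P_{[−n+1,0]}`. -/
def Lsub (L : ℕ → ((ℕ → X) →ₗ[ℝ] X)) : ℕ → ((ℕ → X) →ₗ[ℝ] X) :=
  fun n => if n = 0 then 0 else (L n).comp (Phead (n - 1))

/-- The system has bounded delay of order `d`. -/
def BoundedDelay (L : ℕ → ((ℕ → X) →ₗ[ℝ] X)) (d : ℕ) : Prop :=
  ∀ n : ℕ, ∃ A : Fin d → (X →L[ℝ] X), ∀ φ : ℕ → X, L n φ = ∑ k : Fin d, A k (φ k)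

set_option linter.unusedSectionVars false
/-! ### Auxiliary machinery for statement 7 -/

lemma wnorm_zero_eq (φ : ℕ → X) (k : ℕ) : wnorm 0 φ k = ‖φ k‖ := by
  simp [wnorm]

lemma memB_zero_of_le {φ : ℕ → X} {C : ℝ} (h : ∀ k, ‖φ k‖ ≤ C) : MemB 0 φ := by
  refine ⟨C, ?_⟩
  rintro r ⟨k, rfl⟩
  rw [wnorm_zero_eq]
  exact h k

lemma norm_le_Bnorm {φ : ℕ → X} (h : MemB 0 φ) (k : ℕ) : ‖φ k‖ ≤ Bnorm 0 φ := by
  rw [← wnorm_zero_eq φ k]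
  exact le_ciSup h k

lemma Bnorm_le {φ : ℕ → X} {C : ℝ} (h : ∀ k, ‖φ k‖ ≤ C) : Bnorm 0 φ ≤ C :=
  ciSup_le (fun k => by rw [wnorm_zero_eq]; exact h k)

lemma Bnorm_nonneg (φ : ℕ → X) : 0 ≤ Bnorm 0 φ :=
  Real.iSup_nonneg (fun k => by rw [wnorm_zero_eq]; positivity)

lemma Ecoord_apply (j : ℕ) (ψ : X) (k : ℕ) : Ecoord j ψ k = if k = j then ψ else 0 := rfl

lemma Ptail_apply (j : ℕ) (φ : ℕ → X) (k : ℕ) : Ptail j φ k = if j ≤ k then φ k else 0 := rfl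

/-- The canonical history sequence of the solution from `0` with zero initial data. -/
noncomputable def solHist (L : ℕ → ((ℕ → X) →ₗ[ℝ] X)) (f : ℕ → X) : ℕ → (ℕ → X)
  | 0 => fun _ => 0
  | n + 1 => fun k => if k = 0 then L n (solHist L f n) + f n else solHist L f n (k - 1)

/-- The canonical solution from `0` with zero initial data. -/
noncomputable def solN (L : ℕ → ((ℕ → X) →ₗ[ℝ] X)) (f : ℕ → X) (n : ℕ) : X :=
  solHist L f n 0

lemma solN_zero (L : ℕ → ((ℕ → X) →ₗ[ℝ] X)) (f : ℕ → X) : solN L f 0 = 0 := rfl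

lemma solN_succ (L : ℕ → ((ℕ → X) →ₗ[ℝ] X)) (f : ℕ → X) (n : ℕ) :
    solN L f (n + 1) = L n (solHist L f n) + f n := rfl

lemma solHist_apply (L : ℕ → ((ℕ → X) →ₗ[ℝ] X)) (f : ℕ → X) :
    ∀ n k, solHist L f n k = if k ≤ n then solN L f (n - k) else 0 := by
  intro n
  induction n with
  | zero =>
    intro k
    match k with
    | 0 => simp [solHist, solN]
    | m + 1 => simp [solHist]
  | succ n ih =>
    intro k
    match k with
    | 0 => simp [solN]
    | m + 1 =>
      have h1 : solHist L f (n + 1) (m + 1) = solHist L f n m := by simp [solHist]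
      rw [h1, ih m]
      have h2 : m + 1 ≤ n + 1 ↔ m ≤ n := by omega
      have h3 : n + 1 - (m + 1) = n - m := by omega
      simp only [h3]
      by_cases h : m ≤ n
      · rw [if_pos h, if_pos (by omega)]
      · rw [if_neg h, if_neg (by omega)]

lemma solHist_add (L : ℕ → ((ℕ → X) →ₗ[ℝ] X)) (f g : ℕ → X) :
    ∀ n, solHist L (f + g) n = solHist L f n + solHist L g n := by
  intro n
  induction n with
  | zero => funext k; simp [solHist]
  | succ n ih =>
    funext k
    match k with
    | 0 => simp [solHist, ih, map_add, Pi.add_apply]; abel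
    | m + 1 => simp [solHist, ih, Pi.add_apply]

lemma solHist_smul (L : ℕ → ((ℕ → X) →ₗ[ℝ] X)) (a : ℝ) (f : ℕ → X) :
    ∀ n, solHist L (a • f) n = a • solHist L f n := by
  intro n
  induction n with
  | zero => funext k; simp [solHist]
  | succ n ih =>
    funext k
    match k with
    | 0 => simp [solHist, ih, _root_.map_smul, Pi.smul_apply, smul_add]
    | m + 1 => simp [solHist, ih, Pi.smul_apply]

/-- Uniqueness: anything satisfying the recursion with zero initial data agrees with `solN`. -/
lemma sol_eq (L : ℕ → ((ℕ → X) →ₗ[ℝ] X)) (f : ℕ → X) (y : ℤ → X)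
    (h0 : ∀ i : ℤ, i ≤ 0 → y i = 0)
    (hrec : ∀ n : ℕ, y ((n : ℤ) + 1) = L n (hist y (n : ℤ)) + f n) :
    ∀ n : ℕ, y (n : ℤ) = solN L f n := by
  have key : ∀ n : ℕ, hist y (n : ℤ) = solHist L f n := by
    intro n
    induction n with
    | zero =>
      funext k
      show y ((0 : ℕ) - (k : ℤ)) = _
      rw [h0 _ (by omega)]
      simp [solHist]
    | succ n ih =>
      funext k
      match k with
      | 0 =>
        show y (((n : ℤ) + 1) - ((0 : ℕ) : ℤ)) = _
        have h1 : ((n : ℤ) + 1) - ((0 : ℕ) : ℤ) = (n : ℤ) + 1 := by push_cast; ring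
        rw [h1, hrec n, ih]
        simp [solHist]
      | m + 1 =>
        show y (((n + 1 : ℕ) : ℤ) - ((m + 1 : ℕ) : ℤ)) = _
        have h1 : ((n + 1 : ℕ) : ℤ) - ((m + 1 : ℕ) : ℤ) = (n : ℤ) - (m : ℕ) := by
          push_cast; ring
        rw [h1]
        have h2 : y ((n : ℤ) - (m : ℕ)) = hist y (n : ℤ) m := rfl
        rw [h2, ih]
        simp [solHist]
  intro n
  have h1 := congrFun (key n) 0
  have h2 : hist y (n : ℤ) 0 = y (n : ℤ) := by
    show y ((n : ℤ) - ((0 : ℕ) : ℤ)) = _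
    norm_num
  rw [← h2, h1]
  rfl

/-- Extend a function on `ℕ` by zero on negative integers. -/
def zextend (g : ℕ → X) : ℤ → X := fun i => if 0 ≤ i then g i.toNat else 0

lemma hist_zextend (g : ℕ → X) (n : ℕ) :
    hist (zextend g) (n : ℤ) = fun k => if k ≤ n then g (n - k) else 0 := by
  funext k
  show (if (0 : ℤ) ≤ (n : ℤ) - (k : ℕ) then g ((n : ℤ) - (k : ℕ)).toNat else 0) = _
  by_cases h : k ≤ n
  · rw [if_pos (by omega), if_pos h]
    congr 1
    omega
  · rw [if_neg (by omega), if_neg h]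

lemma lpNorm_one_lt_top {f : ℕ → X} (h : Summable fun n => ‖f n‖) : lpNorm 1 f < ∞ := by
  rw [lpNorm, eLpNorm_one_eq_lintegral_enorm, lintegral_count]
  have h2 : Summable fun n => ‖f n‖₊ := by
    rw [← NNReal.summable_coe]
    simpa using h
  exact lt_top_iff_ne_top.2 (ENNReal.tsum_coe_ne_top_iff_summable.2 h2)

lemma bounded_of_lpNorm_top {f : ℕ → X} (h : lpNorm ∞ f < ∞) : ∃ B : ℝ, ∀ n, ‖f n‖ ≤ B := by
  rw [lpNorm, eLpNorm_exponent_top] at h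
  refine ⟨(eLpNormEssSup f Measure.count).toReal, fun n => ?_⟩
  have h1 : (‖f n‖₊ : ℝ≥0∞) ≤ eLpNormEssSup f Measure.count := by
    have hae := ae_le_eLpNormEssSup (f := f) (μ := (Measure.count : Measure ℕ))
    rw [MeasureTheory.ae_iff] at hae
    by_contra hn
    rw [Measure.count_eq_zero_iff] at hae
    have : n ∈ ({a | ¬‖f a‖ₑ ≤ eLpNormEssSup f Measure.count} : Set ℕ) := hn
    rw [hae] at this
    exact this
  have h2 := ENNReal.toReal_mono h.ne h1
  simpa using h2

lemma lpNorm_top_lt_top {f : ℕ → X} {B : ℝ} (h : ∀ n, ‖f n‖ ≤ B) : lpNorm ∞ f < ∞ := by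
  rw [lpNorm, eLpNorm_exponent_top]
  have h1 : eLpNormEssSup f Measure.count ≤ ENNReal.ofReal B := by
    refine essSup_le_of_ae_le _ (Filter.Eventually.of_forall fun n => ?_)
    simpa [← ofReal_norm] using ENNReal.ofReal_le_ofReal (h n)
  exact lt_of_le_of_lt h1 ENNReal.ofReal_lt_top

/-- Via Banach–Steinhaus: a uniform bound for solutions from zero initial data. -/
lemma ubp_bound (L : ℕ → ((ℕ → X) →ₗ[ℝ] X)) (hL : ∀ n, OpBounded 0 (L n))
    (h1 : lplqStable L 1 ∞) :
    ∃ M : ℝ, 0 ≤ M ∧ ∀ f : ℕ → X, Summable (fun n => ‖f n‖) →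
      ∀ n, ‖solN L f n‖ ≤ M * ∑' m, ‖f m‖ := by
  choose CL hCL using hL
  -- a (non-uniform) continuity bound for each time level
  have hD : ∀ n : ℕ, ∃ D : ℝ, 0 ≤ D ∧ ∀ (f : ℕ → X) (b : ℝ), 0 ≤ b → (∀ m, ‖f m‖ ≤ b) →
      ∀ i ≤ n, ‖solN L f i‖ ≤ D * b := by
    intro n
    induction n with
    | zero =>
      refine ⟨0, le_rfl, fun f b hb hfb i hi => ?_⟩
      interval_cases i
      simp [solN_zero]
    | succ n ih =>
      obtain ⟨D, hD0, hDb⟩ := ih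
      refine ⟨max (CL n) 0 * D + 1 + D, by positivity, ?_⟩
      intro f b hb hfb i hi
      have hDb0 : 0 ≤ D * b := mul_nonneg hD0 hb
      have hmax : 0 ≤ max (CL n) 0 := le_max_right _ _
      rcases Nat.lt_or_ge i (n + 1) with h | h
      · have := hDb f b hb hfb i (by omega)
        nlinarith
      · have hi' : i = n + 1 := by omega
        subst hi'
        rw [solN_succ]
        have hent : ∀ k, ‖solHist L f n k‖ ≤ D * b := by
          intro k
          rw [solHist_apply]
          split
          · exact hDb f b hb hfb _ (by omega)
          · simpa using hDb0
        have hmem : MemB 0 (solHist L f n) := memB_zero_of_le hent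
        have hBn : Bnorm 0 (solHist L f n) ≤ D * b := Bnorm_le hent
        have hB0 : 0 ≤ Bnorm 0 (solHist L f n) := Bnorm_nonneg _
        have hle1 : ‖L n (solHist L f n)‖ ≤ CL n * Bnorm 0 (solHist L f n) := hCL n _ hmem
        have hle2 : CL n * Bnorm 0 (solHist L f n) ≤ max (CL n) 0 * (D * b) := by
          calc CL n * Bnorm 0 (solHist L f n) ≤ max (CL n) 0 * Bnorm 0 (solHist L f n) :=
                mul_le_mul_of_nonneg_right (le_max_left _ _) hB0
            _ ≤ max (CL n) 0 * (D * b) := mul_le_mul_of_nonneg_left hBn hmax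
        calc ‖L n (solHist L f n) + f n‖ ≤ ‖L n (solHist L f n)‖ + ‖f n‖ := norm_add_le _ _
          _ ≤ max (CL n) 0 * (D * b) + b := add_le_add (hle1.trans hle2) (hfb n)
          _ ≤ (max (CL n) 0 * D + 1 + D) * b := by nlinarith
  haveI : Fact ((1 : ℝ≥0∞) ≤ 1) := ⟨le_rfl⟩
  -- the solution operators as continuous linear maps on ℓ¹
  have hT : ∀ n : ℕ, ∃ T : lp (fun _ : ℕ => X) 1 →L[ℝ] X, ∀ f, T f = solN L (⇑f) n := by
    intro n
    obtain ⟨D, hD0, hDb⟩ := hD n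
    refine ⟨LinearMap.mkContinuous
      { toFun := fun f => solN L (⇑f) n
        map_add' := fun f g => by
          show solN L (⇑(f + g)) n = solN L (⇑f) n + solN L (⇑g) n
          rw [lp.coeFn_add f g]
          show solHist L (⇑f + ⇑g) n 0 = _
          rw [solHist_add]
          rfl
        map_smul' := fun a f => by
          show solN L (⇑(a • f)) n = (RingHom.id ℝ) a • solN L (⇑f) n
          rw [lp.coeFn_smul a f]
          show solHist L (a • ⇑f) n 0 = _
          rw [solHist_smul]
          rfl } D (fun f => ?_), fun f => rfl⟩
    exact hDb (⇑f) ‖f‖ (norm_nonneg f)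
      (fun m => lp.norm_apply_le_norm one_ne_zero f m) n le_rfl
  choose T hTf using hT
  -- pointwise boundedness
  have hpt : ∀ F : lp (fun _ : ℕ => X) 1, ∃ C : ℝ, ∀ n, ‖T n F‖ ≤ C := by
    intro F
    have hsum : Summable fun m => ‖F m‖ := by
      have := lp.memℓp F
      rw [memℓp_gen_iff (by norm_num : 0 < (1 : ℝ≥0∞).toReal)] at this
      simpa using this
    set x : ℤ → X := zextend (solN L ⇑F) with hxdef
    have hx : IsSolution L (⇑F) 0 0 x := by
      constructor
      · intro k
        have hxk : x (((0 : ℕ) : ℤ) - k) =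
            if (0 : ℤ) ≤ ((0 : ℕ) : ℤ) - k then solN L (⇑F) ((((0 : ℕ) : ℤ) - k).toNat) else 0 :=
          rfl
        rw [hxk]
        by_cases h : (0 : ℤ) ≤ ((0 : ℕ) : ℤ) - k
        · rw [if_pos h, show ((((0 : ℕ) : ℤ)) - (k : ℤ)).toNat = 0 by omega]
          rfl
        · rw [if_neg h]; rfl
      · intro n _
        have h1 : x ((n : ℤ) + 1) = solN L (⇑F) (n + 1) := by
          have hxk : x ((n : ℤ) + 1) =
              if (0 : ℤ) ≤ (n : ℤ) + 1 then solN L (⇑F) (((n : ℤ) + 1).toNat) else 0 := rfl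
          rw [hxk, if_pos (by omega), show ((n : ℤ) + 1).toNat = n + 1 by omega]
        have h2 : hist x (n : ℤ) = solHist L (⇑F) n := by
          rw [hxdef, hist_zextend]
          funext k
          rw [solHist_apply]
        rw [h1, solN_succ, h2]
    have hlt := h1 (⇑F) (lpNorm_one_lt_top hsum) x hx
    obtain ⟨B, hB⟩ := bounded_of_lpNorm_top hlt
    refine ⟨B, fun n => ?_⟩
    rw [hTf n F]
    have : restrict x n = solN L (⇑F) n := by
      have hxk : restrict x n =
          if (0 : ℤ) ≤ ((n : ℕ) : ℤ) then solN L (⇑F) (((n : ℕ) : ℤ).toNat) else 0 := rfl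
      rw [hxk, if_pos (by omega), show (((n : ℕ) : ℤ)).toNat = n by omega]
    rw [← this]
    exact hB n
  obtain ⟨C', hC'⟩ := banach_steinhaus hpt
  refine ⟨max C' 0, le_max_right _ _, ?_⟩
  intro f hf n
  have hmem : Memℓp f 1 := memℓp_gen (by simpa using hf)
  set F : lp (fun _ : ℕ => X) 1 := ⟨f, hmem⟩ with hF
  have hcoe : ⇑F = f := rfl
  have hnorm : ‖F‖ = ∑' m, ‖f m‖ := by
    rw [lp.norm_eq_tsum_rpow (by norm_num : 0 < (1 : ℝ≥0∞).toReal) F]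
    simp [hcoe]
  have h2 : ‖T n F‖ ≤ ‖T n‖ * ‖F‖ := (T n).le_opNorm F
  have h3 : ‖T n‖ * ‖F‖ ≤ max C' 0 * ‖F‖ :=
    mul_le_mul_of_nonneg_right ((hC' n).trans (le_max_left _ _)) (norm_nonneg F)
  have h4 : T n F = solN L f n := by rw [hTf n F, hcoe]
  rw [← h4]
  calc ‖T n F‖ ≤ max C' 0 * ‖F‖ := h2.trans h3
    _ = max C' 0 * ∑' m, ‖f m‖ := by rw [hnorm]

/-- Uniform bounds on the coordinate operators `L n ∘ E_{-k}` for `n ≥ k + 1`. -/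
lemma coord_bound (L : ℕ → ((ℕ → X) →ₗ[ℝ] X)) {M : ℝ} (hM0 : 0 ≤ M)
    (hM : ∀ f : ℕ → X, Summable (fun n => ‖f n‖) → ∀ n, ‖solN L f n‖ ≤ M * ∑' m, ‖f m‖) :
    ∀ k : ℕ, ∃ Mk : ℝ, 0 ≤ Mk ∧ ∀ n : ℕ, k + 1 ≤ n → ∀ ψ : X,
      ‖L n (Ecoord k ψ)‖ ≤ Mk * ‖ψ‖ := by
  intro k
  induction k using Nat.strong_induction_on with
  | _ k IH =>
    set g : ℕ → ℝ := fun i => if h : i < k then (IH i h).choose else 0 with hg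
    have hg0 : ∀ i, i < k → 0 ≤ g i := by
      intro i hi
      rw [hg]
      simp only [dif_pos hi]
      exact (IH i hi).choose_spec.1
    have hgb : ∀ i, i < k → ∀ n : ℕ, i + 1 ≤ n → ∀ ψ : X, ‖L n (Ecoord i ψ)‖ ≤ g i * ‖ψ‖ := by
      intro i hi
      rw [hg]
      simp only [dif_pos hi]
      exact (IH i hi).choose_spec.2
    set S : ℝ := ∑ i ∈ Finset.range k, g i with hS
    have hS0 : 0 ≤ S := Finset.sum_nonneg fun i hi => hg0 i (Finset.mem_range.1 hi)
    refine ⟨M + S * M, by positivity, ?_⟩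
    intro n hn ψ
    set t : ℕ := n - 1 - k with ht
    set pulse : ℕ → X := fun m => if m = t then ψ else 0 with hpulse
    have hpn : ∀ m, ‖pulse m‖ = if m = t then ‖ψ‖ else 0 := by
      intro m
      rw [hpulse]
      split <;> simp_all
    have hsum : Summable fun m => ‖pulse m‖ := by
      rw [funext hpn]
      exact (hasSum_ite_eq t ‖ψ‖).summable
    have htsum : ∑' m, ‖pulse m‖ = ‖ψ‖ := by
      rw [funext hpn]
      exact tsum_ite_eq t (fun _ => ‖ψ‖)
    have hMψ : ∀ s, ‖solN L pulse s‖ ≤ M * ‖ψ‖ := by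
      intro s
      have := hM pulse hsum s
      rwa [htsum] at this
    -- solution is zero up to the pulse
    have hzero : ∀ i, i ≤ t → solN L pulse i = 0 := by
      intro i
      induction i using Nat.strong_induction_on with
      | _ i IH2 =>
        intro hi
        match i with
        | 0 => rfl
        | s + 1 =>
          rw [solN_succ]
          have hh : solHist L pulse s = (0 : ℕ → X) := by
            funext k'
            rw [solHist_apply]
            split
            · exact IH2 (s - k') (by omega) (by omega)
            · rfl
          rw [hh, map_zero, zero_add]
          show (if s = t then ψ else 0) = 0
          exact if_neg (by omega)
    have hstep : solN L pulse (t + 1) = ψ := by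
      rw [solN_succ]
      have hh : solHist L pulse t = (0 : ℕ → X) := by
        funext k'
        rw [solHist_apply]
        split
        · exact hzero (t - k') (by omega)
        · rfl
      rw [hh, map_zero, zero_add]
      show (if t = t then ψ else 0) = ψ
      exact if_pos rfl
    -- structure of the history at time n
    have hhist : solHist L pulse n =
        Ecoord k ψ + ∑ i ∈ Finset.range k, Ecoord i (solN L pulse (n - i)) := by
      funext k'
      have hsapp : (∑ i ∈ Finset.range k, Ecoord (X := X) i (solN L pulse (n - i))) k'
          = ∑ i ∈ Finset.range k, (if k' = i then solN L pulse (n - i) else 0) := by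
        rw [Finset.sum_apply]
        simp only [Ecoord_apply]
      have hsval : (∑ i ∈ Finset.range k, Ecoord (X := X) i (solN L pulse (n - i))) k'
          = if k' ∈ Finset.range k then solN L pulse (n - k') else 0 := by
        rw [hsapp]
        exact Finset.sum_ite_eq (Finset.range k) k' (fun i => solN L pulse (n - i))
      rw [Pi.add_apply, hsval, solHist_apply, Ecoord_apply]
      rcases lt_trichotomy k' k with h | h | h
      · rw [if_pos (show k' ≤ n by omega), if_neg (show ¬k' = k by omega),
          if_pos (Finset.mem_range.2 h), zero_add]
      · subst h
        rw [if_pos (show k' ≤ n by omega), if_pos rfl,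
          if_neg (show k' ∉ Finset.range k' by simp), add_zero,
          show n - k' = t + 1 by omega, hstep]
      · rw [if_neg (show ¬k' = k by omega),
          if_neg (show k' ∉ Finset.range k by simp only [Finset.mem_range]; omega), add_zero]
        split
        · exact hzero (n - k') (by omega)
        · rfl
    -- conclude
    have hLn : L n (solHist L pulse n) = solN L pulse (n + 1) := by
      rw [solN_succ]
      have hp0 : pulse n = 0 := by
        show (if n = t then ψ else 0) = 0
        exact if_neg (by omega)
      rw [hp0, add_zero]
    have hsplit : L n (Ecoord k ψ) = solN L pulse (n + 1)
        - ∑ i ∈ Finset.range k, L n (Ecoord i (solN L pulse (n - i))) := by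
      rw [← hLn, hhist, map_add, map_sum]
      abel
    rw [hsplit]
    have hterm : ∀ i ∈ Finset.range k,
        ‖L n (Ecoord i (solN L pulse (n - i)))‖ ≤ g i * (M * ‖ψ‖) := by
      intro i hi
      have hik := Finset.mem_range.1 hi
      calc ‖L n (Ecoord i (solN L pulse (n - i)))‖
          ≤ g i * ‖solN L pulse (n - i)‖ := hgb i hik n (by omega) _
        _ ≤ g i * (M * ‖ψ‖) := mul_le_mul_of_nonneg_left (hMψ _) (hg0 i hik)
    calc ‖solN L pulse (n + 1) - ∑ i ∈ Finset.range k, L n (Ecoord i (solN L pulse (n - i)))‖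
        ≤ ‖solN L pulse (n + 1)‖
          + ‖∑ i ∈ Finset.range k, L n (Ecoord i (solN L pulse (n - i)))‖ := norm_sub_le _ _
      _ ≤ M * ‖ψ‖ + ∑ i ∈ Finset.range k, ‖L n (Ecoord i (solN L pulse (n - i)))‖ :=
          add_le_add (hMψ _) (norm_sum_le _ _)
      _ ≤ M * ‖ψ‖ + ∑ i ∈ Finset.range k, g i * (M * ‖ψ‖) :=
          add_le_add le_rfl (Finset.sum_le_sum hterm)
      _ = (M + S * M) * ‖ψ‖ := by
          rw [← Finset.sum_mul, hS]
          ring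
/-- Corollary 4.8 (ii): if the system is `(ℓ^1,ℓ^∞)`-stable and
`Σ_n ‖L(n)P_{[−∞,m]}‖_{B^0→X} < ∞` for some `m ≤ 0`, then the homogeneous
system is uniformly stable in `B^0`. -/
theorem statement7 (L : ℕ → ((ℕ → X) →ₗ[ℝ] X)) (hL : ∀ n, OpBounded 0 (L n))
    (h1 : lplqStable L 1 ∞)
    (h2 : ∃ (j : ℕ) (c : ℕ → ℝ), Summable c ∧
      ∀ (n : ℕ) (φ : ℕ → X), MemB 0 φ → ‖L n (Ptail j φ)‖ ≤ c n * Bnorm 0 φ) :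
    USinB 0 L := by
  classical
  obtain ⟨j, c, hc, hcb⟩ := h2
  choose CL hCL using hL
  obtain ⟨M, hM0, hM⟩ := ubp_bound L (fun n => ⟨CL n, hCL n⟩) h1
  choose gM hgM0 hgM using coord_bound L hM0 hM
  set Cmax : ℝ := ∑ i ∈ Finset.range j, max (CL i) 0 with hCmax
  have hCmax0 : 0 ≤ Cmax := Finset.sum_nonneg fun i _ => le_max_right _ _
  have hCmaxle : ∀ m, m < j → max (CL m) 0 ≤ Cmax := fun m hm =>
    Finset.single_le_sum (fun i _ => le_max_right (CL i) 0) (Finset.mem_range.2 hm)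
  set SM : ℝ := ∑ i ∈ Finset.range j, gM i with hSM
  have hSM0 : 0 ≤ SM := Finset.sum_nonneg fun i _ => hgM0 i
  set cplus : ℕ → ℝ := fun m => max (c m) 0 with hcplus
  have hcplus0 : ∀ m, 0 ≤ cplus m := fun m => le_max_right _ _
  have hcpsum : Summable cplus :=
    Summable.of_nonneg_of_le hcplus0 (fun m => max_le (le_abs_self _) (abs_nonneg _)) hc.abs
  set Ctot : ℝ := (∑' m, cplus m) + (j : ℝ) * Cmax + (j : ℝ) * SM with hCtot
  have htsum0 : 0 ≤ ∑' m, cplus m := tsum_nonneg hcplus0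
  have hCtot0 : 0 ≤ Ctot := by positivity
  refine ⟨M * Ctot + 1, by nlinarith [mul_nonneg hM0 hCtot0], ?_⟩
  intro τ φ hφ x hx n _hn
  set Φ := Bnorm 0 φ with hΦ
  have hΦ0 : 0 ≤ Φ := Bnorm_nonneg φ
  have hφΦ : ∀ m, ‖φ m‖ ≤ Φ := norm_le_Bnorm hφ
  -- values in the past are given by φ
  have F0 : ∀ i : ℤ, i ≤ (τ : ℤ) → x i = φ (((τ : ℤ) - i).toNat) := by
    intro i hi
    have h := hx.1 (((τ : ℤ) - i).toNat)
    rw [show ((τ : ℤ) - (((((τ : ℤ) - i).toNat : ℕ)) : ℤ)) = i by omega] at h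
    exact h
  have hxΦ : ∀ i : ℤ, i ≤ (τ : ℤ) → ‖x i‖ ≤ Φ := fun i hi => by
    rw [F0 i hi]; exact hφΦ _
  -- the "old history" part of the history of x
  set z : ℕ → ℕ → X := fun m k => if (m : ℤ) - k ≤ (τ : ℤ) then x ((m : ℤ) - k) else 0 with hz
  have hzΦ : ∀ m k, ‖z m k‖ ≤ Φ := by
    intro m k
    show ‖if (m : ℤ) - k ≤ (τ : ℤ) then x ((m : ℤ) - k) else 0‖ ≤ Φ
    split
    · exact hxΦ _ (by assumption)
    · simpa using hΦ0
  have hzmem : ∀ m, MemB 0 (z m) := fun m => memB_zero_of_le (hzΦ m)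
  have hzB : ∀ m, Bnorm 0 (z m) ≤ Φ := fun m => Bnorm_le (hzΦ m)
  have hzB0 : ∀ m, 0 ≤ Bnorm 0 (z m) := fun m => Bnorm_nonneg _
  set y : ℤ → X := fun i => if (τ : ℤ) < i then x i else 0 with hy
  set f' : ℕ → X := fun m => if τ ≤ m then L m (z m) else 0 with hf'
  -- y solves the nonhomogeneous system with forcing f', zero initial data at 0
  have hsplit : ∀ m : ℕ, hist x (m : ℤ) = hist y (m : ℤ) + z m := by
    intro m
    funext k
    show x ((m : ℤ) - k) = (if (τ : ℤ) < (m : ℤ) - k then x ((m : ℤ) - k) else 0)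
      + (if (m : ℤ) - k ≤ (τ : ℤ) then x ((m : ℤ) - k) else 0)
    by_cases h : (m : ℤ) - k ≤ (τ : ℤ)
    · rw [if_pos h, if_neg (by omega), zero_add]
    · rw [if_neg h, if_pos (by omega), add_zero]
  have hyrec : ∀ m : ℕ, y ((m : ℤ) + 1) = L m (hist y (m : ℤ)) + f' m := by
    intro m
    by_cases h : τ ≤ m
    · have h1 : y ((m : ℤ) + 1) = x ((m : ℤ) + 1) := by
        show (if (τ : ℤ) < (m : ℤ) + 1 then x ((m : ℤ) + 1) else 0) = _
        rw [if_pos (by omega)]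
      have h2 := hx.2 m h
      have h3 : f' m = L m (z m) := by
        show (if τ ≤ m then L m (z m) else 0) = _
        rw [if_pos h]
      rw [h1, h2, hsplit m, map_add, h3]
      simp
    · have h1 : y ((m : ℤ) + 1) = 0 := by
        show (if (τ : ℤ) < (m : ℤ) + 1 then x ((m : ℤ) + 1) else 0) = 0
        rw [if_neg (by omega)]
      have h2 : hist y (m : ℤ) = (0 : ℕ → X) := by
        funext k
        show (if (τ : ℤ) < (m : ℤ) - k then x ((m : ℤ) - k) else 0) = 0
        rw [if_neg (by omega)]
      have h3 : f' m = 0 := by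
        show (if τ ≤ m then L m (z m) else 0) = 0
        rw [if_neg h]
      rw [h1, h2, h3, map_zero, add_zero]
  have hy0 : ∀ i : ℤ, i ≤ 0 → y i = 0 := by
    intro i hi
    show (if (τ : ℤ) < i then x i else 0) = 0
    rw [if_neg (by omega)]
  have hysol := sol_eq L f' y hy0 hyrec
  -- bound each forcing term
  have hbnd : ∀ m, ‖f' m‖ ≤ cplus m * Φ + ((if m < j then Cmax * Φ else 0)
      + (if τ ≤ m ∧ m < τ + j then SM * Φ else 0)) := by
    intro m
    have hp1 : 0 ≤ cplus m * Φ := mul_nonneg (hcplus0 m) hΦ0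
    have hp2 : 0 ≤ (if m < j then Cmax * Φ else 0 : ℝ) := by positivity
    have hp3 : 0 ≤ (if τ ≤ m ∧ m < τ + j then SM * Φ else 0 : ℝ) := by positivity
    by_cases hτm : τ ≤ m
    · have hfm : f' m = L m (z m) := by
        show (if τ ≤ m then L m (z m) else 0) = _
        rw [if_pos hτm]
      rw [hfm]
      by_cases hmj : m < j
      · -- head regime
        have hb1 := hCL m (z m) (hzmem m)
        have hb2 : CL m * Bnorm 0 (z m) ≤ Cmax * Φ := by
          calc CL m * Bnorm 0 (z m) ≤ max (CL m) 0 * Bnorm 0 (z m) :=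
                mul_le_mul_of_nonneg_right (le_max_left _ _) (hzB0 m)
            _ ≤ max (CL m) 0 * Φ := mul_le_mul_of_nonneg_left (hzB m) (le_max_right _ _)
            _ ≤ Cmax * Φ := mul_le_mul_of_nonneg_right (hCmaxle m hmj) hΦ0
        rw [if_pos hmj]
        linarith [hb1.trans hb2]
      · by_cases hmid : m < τ + j
        · -- middle regime
          have hdecomp : z m = Ptail j (z m) + ∑ i ∈ Finset.range j, Ecoord i (z m i) := by
            funext k
            have hsval : (∑ i ∈ Finset.range j, Ecoord (X := X) i (z m i)) k
                = if k ∈ Finset.range j then z m k else 0 := by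
              rw [Finset.sum_apply]
              simp only [Ecoord_apply]
              exact Finset.sum_ite_eq (Finset.range j) k (fun i => z m i)
            rw [Pi.add_apply, hsval, Ptail_apply]
            by_cases h : j ≤ k
            · rw [if_pos h, if_neg (by simp only [Finset.mem_range]; omega), add_zero]
            · rw [if_neg h, if_pos (by simp only [Finset.mem_range]; omega), zero_add]
          have hb1 : ‖L m (Ptail j (z m))‖ ≤ cplus m * Φ := by
            calc ‖L m (Ptail j (z m))‖ ≤ c m * Bnorm 0 (z m) := hcb m (z m) (hzmem m)
              _ ≤ max (c m) 0 * Bnorm 0 (z m) :=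
                  mul_le_mul_of_nonneg_right (le_max_left _ _) (hzB0 m)
              _ ≤ cplus m * Φ := mul_le_mul_of_nonneg_left (hzB m) (le_max_right _ _)
          have hb2 : ∀ i ∈ Finset.range j, ‖L m (Ecoord i (z m i))‖ ≤ gM i * Φ := by
            intro i hi
            have hij := Finset.mem_range.1 hi
            calc ‖L m (Ecoord i (z m i))‖ ≤ gM i * ‖z m i‖ := hgM i m (by omega) _
              _ ≤ gM i * Φ := mul_le_mul_of_nonneg_left (hzΦ m i) (hgM0 i)
          calc ‖L m (z m)‖
              = ‖L m (Ptail j (z m)) + ∑ i ∈ Finset.range j, L m (Ecoord i (z m i))‖ := by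
                rw [← map_sum, ← map_add, ← hdecomp]
            _ ≤ ‖L m (Ptail j (z m))‖ + ‖∑ i ∈ Finset.range j, L m (Ecoord i (z m i))‖ :=
                norm_add_le _ _
            _ ≤ cplus m * Φ + ∑ i ∈ Finset.range j, gM i * Φ :=
                add_le_add hb1 ((norm_sum_le _ _).trans (Finset.sum_le_sum hb2))
            _ = cplus m * Φ + SM * Φ := by rw [← Finset.sum_mul]
            _ ≤ _ := by
                rw [if_neg hmj, if_pos (show τ ≤ m ∧ m < τ + j from ⟨hτm, hmid⟩)]
                linarith
        · -- tail regime
          have hdecomp : z m = Ptail j (z m) := by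
            funext k
            rw [Ptail_apply]
            by_cases h : j ≤ k
            · rw [if_pos h]
            · rw [if_neg h]
              show (if (m : ℤ) - k ≤ (τ : ℤ) then x ((m : ℤ) - k) else 0) = 0
              rw [if_neg (by omega)]
          have heq : L m (z m) = L m (Ptail j (z m)) := by rw [← hdecomp]
          rw [heq]
          calc ‖L m (Ptail j (z m))‖ ≤ c m * Bnorm 0 (z m) := hcb m (z m) (hzmem m)
            _ ≤ max (c m) 0 * Bnorm 0 (z m) :=
                mul_le_mul_of_nonneg_right (le_max_left _ _) (hzB0 m)
            _ ≤ cplus m * Φ := mul_le_mul_of_nonneg_left (hzB m) (le_max_right _ _)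
            _ ≤ _ := by linarith
    · have hfm : f' m = 0 := by
        show (if τ ≤ m then L m (z m) else 0) = 0
        rw [if_neg hτm]
      rw [hfm, norm_zero]
      linarith
  -- summability of the bounding sequence
  have hsum1 : Summable fun m => cplus m * Φ := hcpsum.mul_right Φ
  have hsum2 : Summable fun m => (if m < j then Cmax * Φ else 0 : ℝ) :=
    summable_of_ne_finset_zero (s := Finset.range j) (fun m hm => if_neg (by simpa using hm))
  have hsum3 : Summable fun m => (if τ ≤ m ∧ m < τ + j then SM * Φ else 0 : ℝ) :=
    summable_of_ne_finset_zero (s := Finset.Ico τ (τ + j))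
      (fun m hm => if_neg (by simpa using hm))
  have hsumbnd : Summable fun m => cplus m * Φ + ((if m < j then Cmax * Φ else 0 : ℝ)
      + (if τ ≤ m ∧ m < τ + j then SM * Φ else 0 : ℝ)) := hsum1.add (hsum2.add hsum3)
  have hsumf : Summable fun m => ‖f' m‖ :=
    Summable.of_nonneg_of_le (fun m => norm_nonneg _) hbnd hsumbnd
  -- bound on the ℓ¹ norm of the forcing
  have htb : ∑' m, ‖f' m‖ ≤ Ctot * Φ := by
    have h1 : ∑' m, ‖f' m‖ ≤ ∑' m, (cplus m * Φ + ((if m < j then Cmax * Φ else 0 : ℝ)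
        + (if τ ≤ m ∧ m < τ + j then SM * Φ else 0 : ℝ))) :=
      Summable.tsum_le_tsum hbnd hsumf hsumbnd
    have h2 : ∑' m, (cplus m * Φ + ((if m < j then Cmax * Φ else 0 : ℝ)
        + (if τ ≤ m ∧ m < τ + j then SM * Φ else 0 : ℝ)))
        = (∑' m, cplus m * Φ) + ((∑' m, (if m < j then Cmax * Φ else 0 : ℝ))
          + (∑' m, (if τ ≤ m ∧ m < τ + j then SM * Φ else 0 : ℝ))) := by
      rw [Summable.tsum_add hsum1 (hsum2.add hsum3), Summable.tsum_add hsum2 hsum3]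
    have h3 : ∑' m, cplus m * Φ = (∑' m, cplus m) * Φ := tsum_mul_right
    have h4 : (∑' m, (if m < j then Cmax * Φ else 0 : ℝ)) ≤ (j : ℝ) * (Cmax * Φ) := by
      rw [tsum_eq_sum (s := Finset.range j) (fun m hm => if_neg (by simpa using hm))]
      calc ∑ m ∈ Finset.range j, (if m < j then Cmax * Φ else 0 : ℝ)
          ≤ ∑ _m ∈ Finset.range j, Cmax * Φ := Finset.sum_le_sum (fun m _ => by
            split
            · exact le_rfl
            · positivity)
        _ = (j : ℝ) * (Cmax * Φ) := by
            rw [Finset.sum_const, Finset.card_range, nsmul_eq_mul]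
    have h5 : (∑' m, (if τ ≤ m ∧ m < τ + j then SM * Φ else 0 : ℝ)) ≤ (j : ℝ) * (SM * Φ) := by
      rw [tsum_eq_sum (s := Finset.Ico τ (τ + j)) (fun m hm => if_neg (by simpa using hm))]
      calc ∑ m ∈ Finset.Ico τ (τ + j), (if τ ≤ m ∧ m < τ + j then SM * Φ else 0 : ℝ)
          ≤ ∑ _m ∈ Finset.Ico τ (τ + j), SM * Φ := Finset.sum_le_sum (fun m _ => by
            split
            · exact le_rfl
            · positivity)
        _ = (j : ℝ) * (SM * Φ) := by
            rw [Finset.sum_const, Nat.card_Ico, nsmul_eq_mul]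
            congr 2
            omega
    calc ∑' m, ‖f' m‖ ≤ _ := h1
      _ = _ := h2
      _ ≤ (∑' m, cplus m) * Φ + ((j : ℝ) * (Cmax * Φ) + (j : ℝ) * (SM * Φ)) := by
          rw [h3]
          exact add_le_add le_rfl (add_le_add h4 h5)
      _ = Ctot * Φ := by rw [hCtot]; ring
  -- the uniform bound on x beyond τ
  have hxbound : ∀ m : ℕ, (τ : ℤ) < (m : ℤ) → ‖x (m : ℤ)‖ ≤ M * (Ctot * Φ) := by
    intro m hm
    have h1 : x (m : ℤ) = y (m : ℤ) := by
      show _ = (if (τ : ℤ) < (m : ℤ) then x (m : ℤ) else 0)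
      rw [if_pos hm]
    rw [h1, hysol m]
    calc ‖solN L f' m‖ ≤ M * ∑' i, ‖f' i‖ := hM f' hsumf m
      _ ≤ M * (Ctot * Φ) := mul_le_mul_of_nonneg_left htb hM0
  -- conclude
  refine Bnorm_le (fun k => ?_)
  show ‖x ((n : ℤ) - k)‖ ≤ (M * Ctot + 1) * Φ
  by_cases h : (n : ℤ) - k ≤ (τ : ℤ)
  · have := hxΦ _ h
    nlinarith [mul_nonneg hM0 hCtot0]
  · have h2 : ((n - k : ℕ) : ℤ) = (n : ℤ) - k := by omega
    have h3 := hxbound (n - k) (by omega)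
    rw [h2] at h3
    nlinarith [h3, mul_nonneg (mul_nonneg hM0 hCtot0) hΦ0]

end BP
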